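/- arXiv:1910.01606 — 4 statements merged into one kernel-verified Lean document; each statement's English description precedes it below -/
import Mathlib

section
/- For a polynomial V of even degree 2k with positive leading coefficient and any real polynomial P, the function f(λ) = ∫_ℝ P(φ) e^{-φ²/2 - λV(φ)} dφ/√(2π) is analytic on the open half-plane {λ ∈ ℂ : Re λ > 0}, with derivative f'(λ) = ∫_ℝ P(φ)(-V(φ)) e^{-φ²/2 - λV(φ)} dφ/√(2π). -/
/-!
A polynomial `V` of even degree with positive leading coefficient is bounded below, say by `m`.
For `0 ≤ Re z ≤ R` this gives `|e^{-φ²/2 - zV(φ)}| ≤ e^{-φ²/2} e^{R|m|}`, so on a ball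
around `λ` inside the half-plane both the integrand and its `z`-derivative are dominated by a
polynomial times the Gaussian. Differentiation under the integral sign then yields the complex
derivative at every point of the open half-plane, and a function holomorphic on an open set is
analytic there.
-/

open MeasureTheory Real Filter Topology Polynomial
open scoped Complex

namespace Polynomial

theorem integrable_eval_mul_exp_neg_mul_sq (Q : ℝ[X]) {b : ℝ} (hb : 0 < b) :
    Integrable fun x : ℝ => Q.eval x * rexp (-b * x ^ 2) := by
  have hmon (n : ℕ) : Integrable fun x : ℝ => x ^ n * rexp (-b * x ^ 2) := by
    simpa [Real.rpow_natCast] using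
      integrable_rpow_mul_exp_neg_mul_sq hb (s := n) (by linarith [n.cast_nonneg (α := ℝ)])
  simp_rw [eval_eq_sum_range, Finset.sum_mul, mul_assoc]
  exact integrable_finsetSum _ fun i _ => (hmon i).const_mul _

theorem tendsto_eval_cocompact_atTop_of_even (V : ℝ[X]) (hdeg : 0 < V.degree)
    (heven : Even V.natDegree) (hlead : 0 < V.leadingCoeff) :
    Tendsto V.eval (cocompact ℝ) atTop := by
  have hW : (V.comp (-X)).leadingCoeff = V.leadingCoeff := by
    rw [leadingCoeff_comp (by simp)]
    simp [heven.neg_one_pow]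
  have hWdeg : 0 < (V.comp (-X)).degree := by
    rw [degree_eq_natDegree (by intro h; simp [h] at hW; exact hlead.ne hW), natDegree_comp]
    simpa [← natDegree_pos_iff_degree_pos] using hdeg
  have hbot : Tendsto V.eval atBot atTop := by
    simpa [Function.comp_def] using
      (tendsto_atTop_of_leadingCoeff_nonneg _ hWdeg (hW ▸ hlead.le)).comp tendsto_neg_atBot_atTop
  rw [cocompact_eq_atBot_atTop, tendsto_sup]
  exact ⟨hbot, tendsto_atTop_of_leadingCoeff_nonneg V hdeg hlead.le⟩

theorem exists_forall_le_eval_of_even (V : ℝ[X]) (heven : Even V.natDegree)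
    (hlead : 0 < V.leadingCoeff) : ∃ m, ∀ x, m ≤ V.eval x := by
  rcases (Nat.zero_le V.natDegree).eq_or_lt with h0 | hpos
  · exact ⟨V.eval 0, fun x => by rw [eq_C_of_natDegree_eq_zero h0.symm]; simp⟩
  · have hdeg := natDegree_pos_iff_degree_pos.mp hpos
    obtain ⟨x, hx⟩ :=
      V.continuous.exists_forall_le (V.tendsto_eval_cocompact_atTop_of_even hdeg heven hlead)
    exact ⟨V.eval x, hx⟩

end Polynomial

theorem norm_cexp_neg_sq_div_two_sub_mul_le {m v R : ℝ} {z : ℂ} (hmv : m ≤ v)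
    (hz : 0 ≤ z.re) (hzR : z.re ≤ R) (φ : ℝ) :
    ‖cexp (-(φ : ℂ) ^ 2 / 2 - z * v)‖ ≤ rexp (-(1 / 2) * φ ^ 2) * rexp (R * |m|) := by
  rw [Complex.norm_exp, ← Real.exp_add]
  gcongr
  have : (-(φ : ℂ) ^ 2 / 2 - z * v).re = -(1 / 2) * φ ^ 2 - z.re * v := by
    simp [← Complex.ofReal_pow]; ring
  rw [this]
  nlinarith [neg_abs_le m, abs_nonneg m]

section

variable (P V : ℝ[X])

theorem hasDerivAt_integral_mul_cexp_neg_sq_div_two_sub_mul {m : ℝ} (hm : ∀ x, m ≤ V.eval x)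
    {l : ℂ} (hl : 0 < l.re) :
    HasDerivAt (fun z : ℂ => ∫ φ : ℝ, ↑(P.eval φ) * cexp (-(φ : ℂ) ^ 2 / 2 - z * V.eval φ))
      (∫ φ : ℝ, ↑(P.eval φ) * -↑(V.eval φ) * cexp (-(φ : ℂ) ^ 2 / 2 - l * V.eval φ))
      l := by
  set B := rexp (2 * l.re * |m|)
  have hball : ∀ z ∈ Metric.ball l (l.re / 2), 0 ≤ z.re ∧ z.re ≤ 2 * l.re := by
    intro z hz
    have := (Complex.abs_re_le_norm (z - l)).trans_lt (mem_ball_iff_norm.mp hz)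
    rw [Complex.sub_re, abs_lt] at this
    constructor <;> linarith
  have hbound (Q : ℝ[X]) (w : ℝ → ℂ) (hw : ∀ φ, ‖w φ‖ = ‖Q.eval φ‖) :
      ∀ φ : ℝ, ∀ z ∈ Metric.ball l (l.re / 2),
        ‖w φ * cexp (-(φ : ℂ) ^ 2 / 2 - z * V.eval φ)‖ ≤
          ‖Q.eval φ * rexp (-(1 / 2) * φ ^ 2)‖ * B := by
    intro φ z hz
    rw [norm_mul, norm_mul, hw, Real.norm_of_nonneg (exp_pos _).le, mul_assoc]
    gcongr
    exact norm_cexp_neg_sq_div_two_sub_mul_le (hm φ) (hball z hz).1 (hball z hz).2 φ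
  have hderiv (φ : ℝ) (z : ℂ) :
      HasDerivAt (fun w : ℂ => ↑(P.eval φ) * cexp (-(φ : ℂ) ^ 2 / 2 - w * V.eval φ))
        (↑(P.eval φ) * -↑(V.eval φ) * cexp (-(φ : ℂ) ^ 2 / 2 - z * V.eval φ)) z := by
    refine ((((hasDerivAt_id' z).mul_const (↑(V.eval φ) : ℂ)).const_sub
      (-(φ : ℂ) ^ 2 / 2)).cexp.const_mul ↑(P.eval φ)).congr_deriv ?_
    ring
  have hint :
      Integrable fun φ : ℝ => (↑(P.eval φ) : ℂ) * cexp (-(φ : ℂ) ^ 2 / 2 - l * V.eval φ) :=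
    ((P.integrable_eval_mul_exp_neg_mul_sq one_half_pos).norm.mul_const B).mono'
      (by fun_prop : Continuous _).aestronglyMeasurable
      (.of_forall fun φ => hbound P (fun φ => ↑(P.eval φ)) (fun φ => by simp) φ l
        (Metric.mem_ball_self (half_pos hl)))
  exact (hasDerivAt_integral_of_dominated_loc_of_deriv_le (Metric.ball_mem_nhds l (half_pos hl))
    (.of_forall fun z => (by fun_prop : Continuous _).aestronglyMeasurable) hint
    (by fun_prop : Continuous _).aestronglyMeasurable
    (.of_forall (hbound (P * V) (fun φ => ↑(P.eval φ) * -↑(V.eval φ)) fun φ => by simp))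
    (((P * V).integrable_eval_mul_exp_neg_mul_sq one_half_pos).norm.mul_const B)
    (.of_forall fun φ z _ => hderiv φ z)).2

theorem analyticAt_integral_mul_cexp_neg_sq_div_two_sub_mul {m : ℝ} (hm : ∀ x, m ≤ V.eval x)
    {l : ℂ} (hl : 0 < l.re) :
    AnalyticAt ℂ
      (fun z : ℂ => ∫ φ : ℝ, ↑(P.eval φ) * cexp (-(φ : ℂ) ^ 2 / 2 - z * V.eval φ)) l :=
  DifferentiableOn.analyticAt (s := {z : ℂ | 0 < z.re})
    (fun _ hz => (hasDerivAt_integral_mul_cexp_neg_sq_div_two_sub_mul P V hm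
      hz).differentiableAt.differentiableWithinAt)
    ((isOpen_lt continuous_const Complex.continuous_re).mem_nhds hl)

end

theorem stmt2_general (k : ℕ) (V P : Polynomial ℝ)
    (hdeg : V.natDegree = 2 * k) (hlead : 0 < V.leadingCoeff)
    (f : ℂ → ℂ)
    (hf : ∀ lam : ℂ, 0 ≤ lam.re → f lam =
      ∫ φ : ℝ, ((P.eval φ : ℝ) : ℂ) *
        Complex.exp (-(φ : ℂ) ^ 2 / 2 - lam * ((V.eval φ : ℝ) : ℂ)) /
          Real.sqrt (2 * π)) :
    ∀ lam : ℂ, 0 < lam.re →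
      AnalyticAt ℂ f lam ∧
      HasDerivAt f
        (∫ φ : ℝ, ((P.eval φ : ℝ) : ℂ) * (-((V.eval φ : ℝ) : ℂ)) *
          Complex.exp (-(φ : ℂ) ^ 2 / 2 - lam * ((V.eval φ : ℝ) : ℂ)) /
            Real.sqrt (2 * π)) lam := by
  intro lam hlam
  obtain ⟨m, hm⟩ := V.exists_forall_le_eval_of_even ⟨k, by omega⟩ hlead
  have hf_eq : f =ᶠ[𝓝 lam] fun z =>
      (∫ φ : ℝ, ↑(P.eval φ) * cexp (-(φ : ℂ) ^ 2 / 2 - z * V.eval φ)) / Real.sqrt (2 * π) := by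
    filter_upwards [(isOpen_lt continuous_const Complex.continuous_re).mem_nhds hlam] with z hz
    rw [hf z (le_of_lt hz), integral_div]
  rw [integral_div]
  exact ⟨(analyticAt_integral_mul_cexp_neg_sq_div_two_sub_mul P V hm hlam).div_const.congr
      hf_eq.symm,
    ((hasDerivAt_integral_mul_cexp_neg_sq_div_two_sub_mul P V hm hlam).div_const
      _).congr_of_eventuallyEq hf_eq⟩

theorem stmt2 (k : ℕ) (hk : 1 ≤ k) (V P : Polynomial ℝ)
    (hdeg : V.natDegree = 2 * k) (hlead : 0 < V.leadingCoeff)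
    (f : ℂ → ℂ)
    (hf : ∀ lam : ℂ, 0 ≤ lam.re → f lam =
      ∫ φ : ℝ, ((P.eval φ : ℝ) : ℂ) *
        Complex.exp (-(φ : ℂ) ^ 2 / 2 - lam * ((V.eval φ : ℝ) : ℂ)) /
          Real.sqrt (2 * π)) :
    ∀ lam : ℂ, 0 < lam.re →
      AnalyticAt ℂ f lam ∧
      HasDerivAt f
        (∫ φ : ℝ, ((P.eval φ : ℝ) : ℂ) * (-((V.eval φ : ℝ) : ℂ)) *
          Complex.exp (-(φ : ℂ) ^ 2 / 2 - lam * ((V.eval φ : ℝ) : ℂ)) /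
            Real.sqrt (2 * π)) lam :=
  stmt2_general k V P hdeg hlead f hf
end

section
/- Let V be a polynomial of even degree 2k with positive leading coefficient that is nonnegative on ℝ, P a real polynomial, f(λ) = ∫_ℝ P(φ) e^{-φ²/2 - λV(φ)} dφ/√(2π), and α_n = ∫_ℝ (P(φ)(-V(φ))^n / n!) e^{-φ²/2} dφ/√(2π). Then for every N ≥ 0, |f(λ) − Σ_{n=0}^N α_n λ^n| ≤ (|λ|^{N+1}/(N+1)!) · ∫_ℝ |P(φ)| V(φ)^{N+1} e^{-φ²/2} dφ/√(2π) for all λ with Re λ > 0; in particular λ^{-N}(f(λ) − Σ_{n=0}^N α_n λ^n) → 0 as λ → 0 inside the right half-plane. -/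
/-!
For `Re w ≤ 0` the remainder `R_N(w) = e^w - ∑_{n<N} w^n/n!` satisfies `‖R_N(w)‖ ≤ ‖w‖^N/N!`:
since `R_{N+1}' = R_N`, the derivative of `t ↦ R_{N+1}(t w)` is `w R_N(t w)`, so a comparison
argument on `[0, 1]` runs the induction, starting from `|e^w| ≤ 1`. As `V ≥ 0`, applying this with
`w = -λ V(φ)` inside the Gaussian integral and exchanging the finite sum with the integral (every
`P V^n e^{-φ²/2}` is integrable) gives the bound, and dividing by `λ^N` leaves `O(|λ|)`.
-/

open MeasureTheory Real Filter Topology Finset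

-- Closed before the final statement: with `Nat` notation open, its binder `φ` is the totient.
section

open scoped Nat

theorem integrable_eval_mul_exp_neg_sq_div_two (Q : Polynomial ℝ) :
    Integrable (fun x : ℝ => Q.eval x * rexp (-x ^ 2 / 2)) := by
  induction Q using Polynomial.induction_on' with
  | add p q hp hq => simpa only [Polynomial.eval_add, add_mul] using hp.fun_add hq
  | monomial n a =>
    have h := integrable_rpow_mul_exp_neg_mul_sq (b := 1 / 2) (by norm_num) (s := n)
      (by linarith [n.cast_nonneg (α := ℝ)])
    refine (h.const_mul a).congr (ae_of_all _ fun x => ?_)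
    simp only [Real.rpow_natCast, Polynomial.eval_monomial]
    ring_nf

theorem integrable_ofReal_eval_mul_exp_neg_sq_div_two_mul_pow (P V : Polynomial ℝ) (c : ℝ)
    (n : ℕ) :
    Integrable fun x : ℝ =>
      ((P.eval x * rexp (-x ^ 2 / 2) / c : ℝ) : ℂ) * ((V.eval x : ℝ) : ℂ) ^ n := by
  have h : Integrable fun x : ℝ => (((P * V ^ n).eval x * rexp (-x ^ 2 / 2) / c : ℝ) : ℂ) :=
    ((integrable_eval_mul_exp_neg_sq_div_two (P * V ^ n)).div_const c).ofReal
  refine h.congr (ae_of_all _ fun x => ?_)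
  simp only [Polynomial.eval_mul, Polynomial.eval_pow]
  push_cast
  ring

theorem hasDerivAt_pow_succ_div_factorial {𝕜 : Type*} [NontriviallyNormedField 𝕜] [CharZero 𝕜]
    (n : ℕ) (x : 𝕜) :
    HasDerivAt (fun x => x ^ (n + 1) / ((n + 1)! : 𝕜)) (x ^ n / (n ! : 𝕜)) x := by
  refine ((hasDerivAt_pow (n + 1) x).div_const ((n + 1)! : 𝕜)).congr_deriv ?_
  rw [Nat.factorial_succ]
  push_cast
  field_simp

theorem hasDerivAt_sum_range_pow_div_factorial {𝕜 : Type*} [NontriviallyNormedField 𝕜]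
    [CharZero 𝕜] (N : ℕ) (x : 𝕜) :
    HasDerivAt (fun x : 𝕜 => ∑ n ∈ range (N + 1), x ^ n / (n ! : 𝕜))
      (∑ n ∈ range N, x ^ n / (n ! : 𝕜)) x := by
  induction N with
  | zero => simpa using hasDerivAt_const x (1 : 𝕜)
  | succ N ih =>
    simpa only [sum_range_succ] using ih.fun_add (hasDerivAt_pow_succ_div_factorial N x)

theorem norm_cexp_sub_sum_le_of_re_nonpos (N : ℕ) {w : ℂ} (hw : w.re ≤ 0) :
    ‖Complex.exp w - ∑ n ∈ range N, w ^ n / (n ! : ℂ)‖ ≤ ‖w‖ ^ N / N ! := by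
  induction N generalizing w with
  | zero => simpa [Complex.norm_exp] using hw
  | succ N ih =>
    set R : ℂ → ℂ := fun u => Complex.exp u - ∑ n ∈ range (N + 1), u ^ n / (n ! : ℂ)
    have hR : ∀ t : ℝ, HasDerivAt (fun t : ℝ => R (t * w))
        ((Complex.exp (t * w) - ∑ n ∈ range N, (t * w) ^ n / (n ! : ℂ)) * w) t := fun t =>
      (((Complex.hasDerivAt_exp _).sub (hasDerivAt_sum_range_pow_div_factorial N _)).comp
        (t : ℂ) (hasDerivAt_mul_const w)).comp_ofReal
    have hB : ∀ t : ℝ, HasDerivAt (fun t : ℝ => (t * ‖w‖) ^ (N + 1) / ((N + 1)! : ℝ))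
        ((t * ‖w‖) ^ N / (N ! : ℝ) * ‖w‖) t := fun t =>
      (hasDerivAt_pow_succ_div_factorial N _).comp t (hasDerivAt_mul_const ‖w‖)
    have h := image_norm_le_of_norm_deriv_right_le_deriv_boundary (a := 0) (b := 1)
      (fun t _ => (hR t).continuousAt.continuousWithinAt) (fun t _ => (hR t).hasDerivWithinAt)
      (by simp [R, sum_range_succ']) hB (fun t ht => ?_) (x := 1) ⟨zero_le_one, le_rfl⟩
    · simpa [R] using h
    · have htw : (t * w : ℂ).re ≤ 0 := by
        simpa using mul_nonpos_of_nonneg_of_nonpos ht.1 hw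
      rw [norm_mul]
      gcongr
      simpa [norm_mul, abs_of_nonneg ht.1] using ih htw

theorem norm_integral_mul_cexp_sub_sum_le {X : Type*} [MeasurableSpace X] {μ : Measure X}
    {g : X → ℂ} {v : X → ℝ} (hv : AEMeasurable v μ) (hv_nonneg : ∀ x, 0 ≤ v x)
    (hg : ∀ n : ℕ, Integrable (fun x => g x * (v x : ℂ) ^ n) μ) {lam : ℂ} (hlam : 0 ≤ lam.re)
    (N : ℕ) :
    ‖∫ x, g x * Complex.exp (-(lam * v x)) ∂μ -
        ∑ n ∈ range (N + 1), (∫ x, g x * (-(v x : ℂ)) ^ n / (n ! : ℂ) ∂μ) * lam ^ n‖ ≤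
      ‖lam‖ ^ (N + 1) / (N + 1)! * ∫ x, ‖g x‖ * v x ^ (N + 1) ∂μ := by
  set w : X → ℂ := fun x => -(lam * v x)
  have hw_re : ∀ x, (w x).re ≤ 0 := fun x => by
    simpa [w] using mul_nonneg hlam (hv_nonneg x)
  have hw_norm : ∀ x, ‖w x‖ = ‖lam‖ * v x := fun x => by
    simp [w, abs_of_nonneg (hv_nonneg x)]
  have hterm_int : ∀ n : ℕ, Integrable (fun x => g x * (w x ^ n / (n ! : ℂ))) μ := fun n =>
    ((hg n).const_mul ((-lam) ^ n / (n ! : ℂ))).congr (ae_of_all _ fun x => by ring)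
  have hg_int : Integrable g μ := by simpa using hg 0
  have hexp_int : Integrable (fun x => g x * Complex.exp (w x)) μ := by
    have hw_meas : AEMeasurable w μ :=
      ((Complex.measurable_ofReal.comp_aemeasurable hv).const_mul lam).neg
    refine hg_int.norm.mono' (hg_int.aestronglyMeasurable.mul
      (Complex.measurable_exp.comp_aemeasurable hw_meas).aestronglyMeasurable)
      (ae_of_all _ fun x => ?_)
    simpa [Complex.norm_exp] using
      mul_le_of_le_one_right (norm_nonneg (g x)) (exp_le_one_iff.2 (hw_re x))
  have hcoeff : ∀ n : ℕ, (∫ x, g x * (-(v x : ℂ)) ^ n / (n ! : ℂ) ∂μ) * lam ^ n =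
      ∫ x, g x * (w x ^ n / (n ! : ℂ)) ∂μ := fun n => by
    rw [← integral_mul_const]
    congr with x
    ring
  calc _ = ‖∫ x, g x * (Complex.exp (w x) - ∑ n ∈ range (N + 1), w x ^ n / (n ! : ℂ)) ∂μ‖ := by
        simp_rw [hcoeff, mul_sub, mul_sum]
        rw [integral_sub hexp_int (integrable_finsetSum _ fun n _ => hterm_int n),
          integral_finsetSum _ fun n _ => hterm_int n]
    _ ≤ ∫ x, ‖lam‖ ^ (N + 1) / (N + 1)! * (‖g x‖ * v x ^ (N + 1)) ∂μ := by
        refine norm_integral_le_of_norm_le (((hg (N + 1)).norm.const_mul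
          (‖lam‖ ^ (N + 1) / (N + 1)!)).congr (ae_of_all _ fun x => ?_)) (ae_of_all _ fun x => ?_)
        · simp [abs_of_nonneg (hv_nonneg x)]
        · calc _ = ‖g x‖ * ‖Complex.exp (w x) - ∑ n ∈ range (N + 1), w x ^ n / (n ! : ℂ)‖ :=
                norm_mul _ _
            _ ≤ ‖g x‖ * (‖w x‖ ^ (N + 1) / (N + 1)!) := by
                gcongr; exact norm_cexp_sub_sum_le_of_re_nonpos _ (hw_re x)
            _ = _ := by rw [hw_norm]; ring
    _ = _ := integral_const_mul _ _

theorem tendsto_zpow_neg_mul_nhdsWithin_zero {𝕜 : Type*} [NormedDivisionRing 𝕜] {S : Set 𝕜}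
    {F : 𝕜 → 𝕜} {C : ℝ} (N : ℕ) (hF : ∀ z ∈ S, ‖F z‖ ≤ ‖z‖ ^ (N + 1) * C) :
    Tendsto (fun z => z ^ (-(N : ℤ)) * F z) (𝓝[S] 0) (𝓝 0) := by
  refine squeeze_zero_norm' (a := fun z => ‖z‖ * C) ?_ ?_
  · filter_upwards [self_mem_nhdsWithin] with z hz
    rcases eq_or_ne z 0 with rfl | hz0
    · have hF0 : F 0 = 0 := by simpa using hF 0 hz
      simp [hF0]
    · calc ‖z ^ (-(N : ℤ)) * F z‖ ≤ ‖z‖ ^ (-(N : ℤ)) * (‖z‖ ^ (N + 1) * C) := by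
            rw [norm_mul, norm_zpow]
            gcongr
            exact hF z hz
        _ = ‖z‖ * C := by
            rw [← mul_assoc, ← zpow_natCast, ← zpow_add₀ (norm_ne_zero_iff.2 hz0)]
            simp
  · have h : Tendsto (fun z : 𝕜 => ‖z‖ * C) (𝓝 0) (𝓝 (‖(0 : 𝕜)‖ * C)) :=
      (continuous_norm.mul continuous_const).tendsto 0
    simpa using h.mono_left nhdsWithin_le_nhds

end

theorem stmt5_general (V P : Polynomial ℝ)
    (hVpos : ∀ φ : ℝ, 0 ≤ V.eval φ)
    (f : ℂ → ℂ) (α : ℕ → ℂ)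
    (hf : ∀ lam : ℂ, 0 ≤ lam.re → f lam =
      ∫ φ : ℝ, ((P.eval φ : ℝ) : ℂ) *
        Complex.exp (-(φ : ℂ) ^ 2 / 2 - lam * ((V.eval φ : ℝ) : ℂ)) /
          Real.sqrt (2 * π))
    (hα : ∀ n : ℕ, α n =
      ∫ φ : ℝ, ((P.eval φ * (-V.eval φ) ^ n / (Nat.factorial n) : ℝ) : ℂ) *
        Complex.exp (-(φ : ℂ) ^ 2 / 2) / Real.sqrt (2 * π)) :
    ∀ N : ℕ,
      (∀ lam : ℂ, 0 < lam.re →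
        ‖f lam - ∑ n ∈ Finset.range (N + 1), α n * lam ^ n‖ ≤
          ‖lam‖ ^ (N + 1) / (Nat.factorial (N + 1) : ℝ) *
            ∫ φ : ℝ, |P.eval φ| * (V.eval φ) ^ (N + 1) *
              Real.exp (-φ ^ 2 / 2) / Real.sqrt (2 * π)) ∧
      Tendsto (fun lam : ℂ =>
          lam ^ (-(N : ℤ)) * (f lam - ∑ n ∈ Finset.range (N + 1), α n * lam ^ n))
        (𝓝[{lam : ℂ | 0 < lam.re}] 0) (𝓝 0) := by
  intro N
  set g : ℝ → ℂ := fun φ => ((P.eval φ * rexp (-φ ^ 2 / 2) / √(2 * π) : ℝ) : ℂ)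
  have hg : ∀ n : ℕ, Integrable (fun φ => g φ * ((V.eval φ : ℝ) : ℂ) ^ n) :=
    integrable_ofReal_eval_mul_exp_neg_sq_div_two_mul_pow P V _
  have hf_g : ∀ lam : ℂ, 0 ≤ lam.re →
      f lam = ∫ φ, g φ * Complex.exp (-(lam * ((V.eval φ : ℝ) : ℂ))) := fun lam hlam => by
    rw [hf lam hlam]
    congr with φ
    rw [sub_eq_add_neg, Complex.exp_add]
    simp only [g]
    push_cast
    ring
  have hα_g : ∀ n : ℕ,
      α n = ∫ φ, g φ * (-((V.eval φ : ℝ) : ℂ)) ^ n / (Nat.factorial n : ℂ) := fun n => by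
    rw [hα n]
    congr with φ
    simp only [g]
    push_cast
    ring
  have hbound_g : ∫ φ : ℝ, |P.eval φ| * V.eval φ ^ (N + 1) * rexp (-φ ^ 2 / 2) / √(2 * π) =
      ∫ φ, ‖g φ‖ * V.eval φ ^ (N + 1) := by
    congr with φ
    rw [Complex.norm_real, Real.norm_eq_abs, abs_div, abs_mul, abs_of_nonneg (exp_pos _).le,
      abs_of_nonneg (sqrt_nonneg _)]
    ring
  have hbound : ∀ lam : ℂ, 0 ≤ lam.re → ‖f lam - ∑ n ∈ range (N + 1), α n * lam ^ n‖ ≤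
      ‖lam‖ ^ (N + 1) / (Nat.factorial (N + 1) : ℝ) *
        ∫ φ : ℝ, |P.eval φ| * V.eval φ ^ (N + 1) * rexp (-φ ^ 2 / 2) / √(2 * π) :=
    fun lam hlam => by
      simpa only [hf_g lam hlam, hα_g, hbound_g] using norm_integral_mul_cexp_sub_sum_le
        V.continuous.aemeasurable hVpos hg hlam N
  exact ⟨fun lam hlam => hbound lam hlam.le, tendsto_zpow_neg_mul_nhdsWithin_zero N
    fun lam hlam => (hbound lam (le_of_lt hlam)).trans_eq (mul_comm_div _ _ _)⟩

theorem stmt5 (k : ℕ) (hk : 1 ≤ k) (V P : Polynomial ℝ)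
    (hdeg : V.natDegree = 2 * k) (hlead : 0 < V.leadingCoeff)
    (hVpos : ∀ φ : ℝ, 0 ≤ V.eval φ)
    (f : ℂ → ℂ) (α : ℕ → ℂ)
    (hf : ∀ lam : ℂ, 0 ≤ lam.re → f lam =
      ∫ φ : ℝ, ((P.eval φ : ℝ) : ℂ) *
        Complex.exp (-(φ : ℂ) ^ 2 / 2 - lam * ((V.eval φ : ℝ) : ℂ)) /
          Real.sqrt (2 * π))
    (hα : ∀ n : ℕ, α n =
      ∫ φ : ℝ, ((P.eval φ * (-V.eval φ) ^ n / (Nat.factorial n) : ℝ) : ℂ) *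
        Complex.exp (-(φ : ℂ) ^ 2 / 2) / Real.sqrt (2 * π)) :
    ∀ N : ℕ,
      (∀ lam : ℂ, 0 < lam.re →
        ‖f lam - ∑ n ∈ Finset.range (N + 1), α n * lam ^ n‖ ≤
          ‖lam‖ ^ (N + 1) / (Nat.factorial (N + 1) : ℝ) *
            ∫ φ : ℝ, |P.eval φ| * (V.eval φ) ^ (N + 1) *
              Real.exp (-φ ^ 2 / 2) / Real.sqrt (2 * π)) ∧
      Tendsto (fun lam : ℂ =>
          lam ^ (-(N : ℤ)) * (f lam - ∑ n ∈ Finset.range (N + 1), α n * lam ^ n))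
        (𝓝[{lam : ℂ | 0 < lam.re}] 0) (𝓝 0) :=
  stmt5_general V P hVpos f α hf hα
end

section
/- For the potential V(φ) = φ^{2k} with k ≥ 1, the partition function Z_0(λ) = ∫_ℝ e^{-φ²/2 - λφ^{2k}} dφ/√(2π) satisfies the linear ODE [∏_{j=0}^{k−1} (2kλ∂_λ + 2j + 1) + ∂_λ] Z_0 = 0 on the open half-plane Re λ > 0. -/
open MeasureTheory Real

/-- One factor of the operator: `f ↦ 2kλ ∂_λ f + (2j+1) f`. -/
noncomputable def factorOp (k j : ℕ) (f : ℂ → ℂ) : ℂ → ℂ :=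
  fun lam => 2 * k * lam * deriv f lam + (2 * j + 1) * f lam

/-- The composed operator `∏_{j=0}^{r-1} (2kλ∂_λ + 2j + 1)`. -/
noncomputable def prodOp (k : ℕ) : ℕ → (ℂ → ℂ) → (ℂ → ℂ)
  | 0, f => f
  | r + 1, f => prodOp k r (factorOp k r f)

open Set

/-!
Write `M_m(λ) = ∫ φ^{2m} e^{-φ²/2 - λφ^{2k}} dφ`. Differentiating under the integral sign
gives `M_m' = -M_{m+k}`, and integrating the `φ`-derivative of `φ^{2m+1} e^{-φ²/2 - λφ^{2k}}`
over `ℝ` gives `(2m+1) M_m = M_{m+1} + 2kλ M_{m+k}`.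
Together: `(2kλ∂_λ + 2m + 1) M_m = M_{m+1}`.
The factors `2kλ∂_λ + 2j + 1` commute on holomorphic functions, so applying them to
`Z₀ = M_0 / √(2π)` in the order `j = 0, …, k - 1` produces `M_k / √(2π) = -Z₀'`.
-/

theorem factorOp_apply (k j : ℕ) (f : ℂ → ℂ) (z : ℂ) :
    factorOp k j f z = 2 * k * z * deriv f z + (2 * j + 1) * f z := rfl

section Commutation

variable {U : Set ℂ} (hU : IsOpen U) (k : ℕ)
include hU

theorem factorOp_congr {j : ℕ} {f g : ℂ → ℂ} (h : EqOn f g U) :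
    EqOn (factorOp k j f) (factorOp k j g) U := fun z hz => by
  simp only [factorOp, (h.eventuallyEq_of_mem (hU.mem_nhds hz)).deriv_eq, h hz]

theorem prodOp_congr (r : ℕ) {f g : ℂ → ℂ} (h : EqOn f g U) :
    EqOn (prodOp k r f) (prodOp k r g) U := by
  induction r generalizing f g with
  | zero => exact h
  | succ r ih => exact ih (factorOp_congr hU k h)

theorem analyticOnNhd_factorOp {f : ℂ → ℂ} (hf : AnalyticOnNhd ℂ f U) (j : ℕ) :
    AnalyticOnNhd ℂ (factorOp k j f) U :=
  ((analyticOnNhd_const.mul analyticOnNhd_id).mul (hf.deriv_of_isOpen hU)).add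
    (analyticOnNhd_const.mul hf)

theorem deriv_factorOp {f : ℂ → ℂ} (hf : AnalyticOnNhd ℂ f U) (j : ℕ) {z : ℂ}
    (hz : z ∈ U) :
    deriv (factorOp k j f) z =
      2 * k * z * deriv (deriv f) z + (2 * k + 2 * j + 1) * deriv f z := by
  have hf' := (hf z hz).differentiableAt.hasDerivAt
  have hf'' := ((hf.deriv_of_isOpen hU) z hz).differentiableAt.hasDerivAt
  have h : HasDerivAt (factorOp k j f) _ z :=
    (((hasDerivAt_id' z).const_mul (2 * k : ℂ)).mul hf'').add (hf'.const_mul (2 * j + 1 : ℂ))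
  rw [h.deriv]
  ring

theorem factorOp_comm {f : ℂ → ℂ} (hf : AnalyticOnNhd ℂ f U) (i j : ℕ) :
    EqOn (factorOp k i (factorOp k j f)) (factorOp k j (factorOp k i f)) U := fun z hz => by
  simp only [factorOp_apply, deriv_factorOp hU k hf _ hz]
  ring

theorem prodOp_factorOp {f : ℂ → ℂ} (hf : AnalyticOnNhd ℂ f U) (r j : ℕ) :
    EqOn (prodOp k r (factorOp k j f)) (factorOp k j (prodOp k r f)) U := by
  induction r generalizing f with
  | zero => exact fun _ _ => rfl
  | succ r ih =>
    exact (prodOp_congr hU k r (factorOp_comm hU k hf r j)).trans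
      (ih (analyticOnNhd_factorOp hU k hf r))

end Commutation

noncomputable def weight (k : ℕ) (lam : ℂ) (φ : ℝ) : ℂ :=
  Complex.exp (-(φ : ℂ) ^ 2 / 2 - lam * (φ : ℂ) ^ (2 * k))

noncomputable def moment (k m : ℕ) (lam : ℂ) : ℂ :=
  ∫ φ : ℝ, (φ : ℂ) ^ (2 * m) * weight k lam φ

theorem integrable_abs_pow_mul_exp_neg_sq_div_two (n : ℕ) :
    Integrable fun x : ℝ => |x| ^ n * Real.exp (-x ^ 2 / 2) := by
  refine (integrable_rpow_mul_exp_neg_mul_sq (b := 1 / 2) (by norm_num)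
    (s := n) (by linarith [n.cast_nonneg (α := ℝ)])).abs.congr (ae_of_all _ fun x => ?_)
  dsimp only
  rw [Real.rpow_natCast, abs_mul, abs_pow, abs_of_pos (Real.exp_pos _)]
  ring_nf

theorem isOpen_re_pos : IsOpen {z : ℂ | 0 < z.re} :=
  isOpen_lt continuous_const Complex.continuous_re

section Moments

variable (k : ℕ)

theorem norm_weight (lam : ℂ) (φ : ℝ) :
    ‖weight k lam φ‖ = Real.exp (-φ ^ 2 / 2 - lam.re * φ ^ (2 * k)) := by
  have h : -(φ : ℂ) ^ 2 / 2 - lam * (φ : ℂ) ^ (2 * k) =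
      ((-φ ^ 2 / 2 : ℝ) : ℂ) - lam * ((φ ^ (2 * k) : ℝ) : ℂ) := by
    push_cast
    ring
  rw [weight, Complex.norm_exp, h, Complex.sub_re, Complex.re_mul_ofReal, Complex.ofReal_re]

theorem norm_pow_mul_weight_le {lam : ℂ} (hlam : 0 ≤ lam.re) (n : ℕ) (φ : ℝ) :
    ‖(φ : ℂ) ^ n * weight k lam φ‖ ≤ |φ| ^ n * Real.exp (-φ ^ 2 / 2) := by
  rw [norm_mul, norm_pow, Complex.norm_real, Real.norm_eq_abs, norm_weight]
  gcongr
  exact sub_le_self _ (mul_nonneg hlam ((even_two_mul k).pow_nonneg φ))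

theorem continuous_pow_mul_weight (lam : ℂ) (n : ℕ) :
    Continuous fun φ : ℝ => (φ : ℂ) ^ n * weight k lam φ := by
  unfold weight
  fun_prop

theorem integrable_pow_mul_weight {lam : ℂ} (hlam : 0 ≤ lam.re) (n : ℕ) :
    Integrable fun φ : ℝ => (φ : ℂ) ^ n * weight k lam φ :=
  (integrable_abs_pow_mul_exp_neg_sq_div_two n).mono'
    (continuous_pow_mul_weight k lam n).aestronglyMeasurable
    (ae_of_all _ (norm_pow_mul_weight_le k hlam n))

theorem hasDerivAt_weight (lam : ℂ) (φ : ℝ) :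
    HasDerivAt (weight k · φ) (-(φ : ℂ) ^ (2 * k) * weight k lam φ) lam := by
  refine (((hasDerivAt_mul_const ((φ : ℂ) ^ (2 * k))).const_sub
    (-(φ : ℂ) ^ 2 / 2)).cexp).congr_deriv ?_
  rw [weight]
  ring

theorem hasDerivAt_moment {lam : ℂ} (hlam : 0 < lam.re) (m : ℕ) :
    HasDerivAt (moment k m) (-moment k (m + k) lam) lam := by
  have h := (hasDerivAt_integral_of_dominated_loc_of_deriv_le (μ := volume)
    (F := fun z φ => (φ : ℂ) ^ (2 * m) * weight k z φ)
    (F' := fun z φ => -((φ : ℂ) ^ (2 * (m + k)) * weight k z φ))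
    (bound := fun φ => |φ| ^ (2 * (m + k)) * Real.exp (-φ ^ 2 / 2))
    (isOpen_re_pos.mem_nhds hlam)
    (.of_forall fun z => (continuous_pow_mul_weight k z _).aestronglyMeasurable)
    (integrable_pow_mul_weight k hlam.le _)
    (continuous_pow_mul_weight k lam _).neg.aestronglyMeasurable
    (ae_of_all _ fun φ z hz => (norm_neg _).trans_le (norm_pow_mul_weight_le k hz.le _ φ))
    (integrable_abs_pow_mul_exp_neg_sq_div_two _)
    (ae_of_all _ fun φ z _ => ?_)).2
  · rwa [integral_neg] at h
  · refine ((hasDerivAt_weight k z φ).const_mul ((φ : ℂ) ^ (2 * m))).congr_deriv ?_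
    rw [mul_add, pow_add]
    ring

theorem hasDerivAt_pow_succ_mul_weight (lam : ℂ) (n : ℕ) (φ : ℝ) :
    HasDerivAt (fun x : ℝ => (x : ℂ) ^ (n + 1) * weight k lam x)
      ((n + 1) * ((φ : ℂ) ^ n * weight k lam φ) - (φ : ℂ) ^ (n + 2) * weight k lam φ
        - 2 * k * lam * ((φ : ℂ) ^ (n + 2 * k) * weight k lam φ)) φ := by
  -- `2 * k - 1` truncates at `k = 0`, where both sides vanish.
  have hpow : (φ : ℂ) * ((2 * k : ℕ) * (φ : ℂ) ^ (2 * k - 1)) =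
      2 * k * (φ : ℂ) ^ (2 * k) := by
    rcases Nat.eq_zero_or_pos k with rfl | hk
    · simp
    · rw [mul_left_comm, mul_pow_sub_one (by omega)]
      push_cast
      ring
  have hexp : HasDerivAt (fun z : ℂ => -z ^ 2 / 2 - lam * z ^ (2 * k))
      (-(2 * (φ : ℂ) ^ 1) / 2 - lam * ((2 * k : ℕ) * (φ : ℂ) ^ (2 * k - 1))) φ :=
    ((hasDerivAt_pow 2 _).neg.div_const 2).sub ((hasDerivAt_pow (2 * k) _).const_mul lam)
  refine (((hasDerivAt_pow (n + 1) (φ : ℂ)).mul hexp.cexp).comp_ofReal).congr_deriv ?_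
  change _ * weight k lam φ + _ * (weight k lam φ * _) = _
  push_cast at hpow ⊢
  linear_combination (-lam * (φ : ℂ) ^ n * weight k lam φ) * hpow

theorem moment_recurrence {lam : ℂ} (hlam : 0 ≤ lam.re) (m : ℕ) :
    (2 * m + 1) * moment k m lam = moment k (m + 1) lam + 2 * k * lam * moment k (m + k) lam := by
  have i₀ := integrable_pow_mul_weight k hlam (2 * m)
  have i₁ := integrable_pow_mul_weight k hlam (2 * m + 2)
  have iₖ := integrable_pow_mul_weight k hlam (2 * m + 2 * k)
  have h := integral_eq_zero_of_hasDerivAt_of_integrable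
    (hasDerivAt_pow_succ_mul_weight k lam (2 * m))
    (((i₀.const_mul _).sub i₁).sub (iₖ.const_mul _)) (integrable_pow_mul_weight k hlam _)
  rw [integral_sub ?_ (iₖ.const_mul _), integral_sub (i₀.const_mul _) i₁,
    integral_const_mul, integral_const_mul] at h
  · simp only [moment, mul_add, mul_one]
    push_cast at h
    linear_combination h
  · exact (i₀.const_mul _).sub i₁

theorem analyticOnNhd_moment (m : ℕ) : AnalyticOnNhd ℂ (moment k m) {z | 0 < z.re} :=
  DifferentiableOn.analyticOnNhd
    (fun _ hz => (hasDerivAt_moment k hz m).differentiableAt.differentiableWithinAt) isOpen_re_pos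

theorem factorOp_const_mul_moment (c : ℂ) (m : ℕ) {z : ℂ} (hz : 0 < z.re) :
    factorOp k m (fun w => c * moment k m w) z = c * moment k (m + 1) z := by
  rw [factorOp_apply, ((hasDerivAt_moment k hz m).const_mul c).deriv]
  linear_combination c * moment_recurrence k hz.le m

theorem prodOp_eqOn_const_mul_moment {Z : ℂ → ℂ} {c : ℂ}
    (hZ : EqOn Z (fun z => c * moment k 0 z) {z | 0 < z.re}) (r : ℕ) :
    EqOn (prodOp k r Z) (fun z => c * moment k r z) {z | 0 < z.re} := by
  have hZ_an : AnalyticOnNhd ℂ Z {z | 0 < z.re} := fun z hz =>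
    ((analyticOnNhd_const.mul (analyticOnNhd_moment k 0)) z hz).congr
      (hZ.eventuallyEq_of_mem (isOpen_re_pos.mem_nhds hz)).symm
  induction r with
  | zero => exact hZ
  | succ r ih =>
    intro z hz
    rw [prodOp, prodOp_factorOp isOpen_re_pos k hZ_an r r hz,
      factorOp_congr isOpen_re_pos k ih hz]
    exact factorOp_const_mul_moment k c r hz

end Moments

theorem stmt9_general (k : ℕ) (Z₀ : ℂ → ℂ)
    (hZ : ∀ lam : ℂ, 0 < lam.re → Z₀ lam =
      ∫ φ : ℝ, Complex.exp (-(φ : ℂ) ^ 2 / 2 - lam * (φ : ℂ) ^ (2 * k)) /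
        Real.sqrt (2 * π)) :
    ∀ lam : ℂ, 0 < lam.re →
      prodOp k k Z₀ lam + deriv Z₀ lam = 0 := by
  intro lam hlam
  have hZ₀ : EqOn Z₀ (fun z => (Real.sqrt (2 * π) : ℂ)⁻¹ * moment k 0 z) {z | 0 < z.re} :=
    fun z hz => by
      rw [hZ z hz, integral_div, div_eq_inv_mul]
      simp only [moment, weight, mul_zero, pow_zero, one_mul]
  have hderiv : deriv Z₀ lam = -((Real.sqrt (2 * π) : ℂ)⁻¹ * moment k k lam) := by
    rw [(hZ₀.eventuallyEq_of_mem (isOpen_re_pos.mem_nhds hlam)).deriv_eq,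
      ((hasDerivAt_moment k hlam 0).const_mul _).deriv, zero_add, mul_neg]
  rw [prodOp_eqOn_const_mul_moment k hZ₀ k hlam, hderiv, add_neg_cancel]

theorem stmt9 (k : ℕ) (hk : 1 ≤ k) (Z₀ : ℂ → ℂ)
    (hZ : ∀ lam : ℂ, 0 < lam.re → Z₀ lam =
      ∫ φ : ℝ, Complex.exp (-(φ : ℂ) ^ 2 / 2 - lam * (φ : ℂ) ^ (2 * k)) /
        Real.sqrt (2 * π)) :
    ∀ lam : ℂ, 0 < lam.re →
      prodOp k k Z₀ lam + deriv Z₀ lam = 0 :=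
  stmt9_general k Z₀ hZ
end

section
/- If L is a nontrivial discrete additive subgroup (lattice) of ℂ that is invariant under rotation by angle 2π/(k−1) about the origin, with k ≥ 3, then k ∈ {3, 4, 5, 7} (crystallographic restriction: the rotation order k−1 must be 2, 3, 4, or 6). -/
/-!
With `n = k - 1` and `ζ = exp (2πi/n)`, the lattice `L` is stable under `ζ` and under
`ζ⁻¹ = ζ ^ (n - 1)`, hence under the real number `t = ζ + ζ⁻¹ = 2 cos (2π/n)`. On the real line
through a nonzero lattice point `z₀`, `L` cuts out a discrete, hence cyclic, subgroup `ℤ a` of `ℝ`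
stable under multiplication by `t`; so `t a ∈ ℤ a` forces `t ∈ ℤ`. By Niven's theorem, the only
rational values of `cos (2π/n)` with `n ≥ 2` occur for `n ∈ {2, 3, 4, 6}`.
-/

open Real

theorem AddSubgroup.exists_intCast_eq_of_mul_mem {K : Type*} [Field K] [LinearOrder K]
    [IsStrictOrderedRing K] [Archimedean K] {M : AddSubgroup K} (hM : M ≠ ⊥) {δ : K}
    (hδ : 0 < δ) (hsep : Disjoint (M : Set K) (Set.Ioo 0 δ)) {t : K}
    (ht : ∀ c ∈ M, t * c ∈ M) : ∃ N : ℤ, t = N := by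
  obtain ⟨a, rfl⟩ := AddSubgroup.cyclic_of_isolated_zero hδ hsep
  have ha : a ≠ 0 := by
    rintro rfl
    simp at hM
  obtain ⟨N, hN⟩ := AddSubgroup.mem_closure_singleton.mp (ht a (AddSubgroup.subset_closure rfl))
  refine ⟨N, mul_right_cancel₀ ha ?_⟩
  rw [← hN, zsmul_eq_mul]

theorem AddSubgroup.exists_intCast_eq_of_smul_mem {E : Type*} [NormedAddCommGroup E]
    [NormedSpace ℝ E] {L : AddSubgroup E} (hL : L ≠ ⊥)
    (hdisc : ∃ ε : ℝ, 0 < ε ∧ ∀ z ∈ L, z ≠ 0 → ε ≤ ‖z‖) {t : ℝ}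
    (ht : ∀ z ∈ L, t • z ∈ L) : ∃ N : ℤ, t = N := by
  obtain ⟨ε, hε, hsep⟩ := hdisc
  obtain ⟨⟨z₀, hz₀L⟩, hz₀⟩ := AddSubgroup.ne_bot_iff_exists_ne_zero.mp hL
  replace hz₀ : 0 < ‖z₀‖ := norm_pos_iff.mpr (by simpa using hz₀)
  let M : AddSubgroup ℝ := L.comap (LinearMap.toSpanSingleton ℝ E z₀).toAddMonoidHom
  have hmem {c : ℝ} : c ∈ M ↔ c • z₀ ∈ L := Iff.rfl
  refine M.exists_intCast_eq_of_mul_mem (δ := ε / ‖z₀‖) ?_ (by positivity) ?_ ?_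
  · exact AddSubgroup.ne_bot_iff_exists_ne_zero.mpr
      ⟨⟨1, hmem.mpr (by simpa using hz₀L)⟩, by simp⟩
  · refine Set.disjoint_left.mpr fun c hc ⟨hc0, hcδ⟩ => ?_
    have := hsep _ (hmem.mp hc) (smul_ne_zero hc0.ne' (norm_pos_iff.mp hz₀))
    rw [norm_smul, Real.norm_of_nonneg hc0.le, ← div_le_iff₀ hz₀] at this
    exact this.not_gt hcδ
  · intro c hc
    simpa [hmem, mul_smul] using ht _ (hmem.mp hc)

theorem AddSubgroup.pow_mul_mem {R : Type*} [Ring R] {L : AddSubgroup R} {ζ : R}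
    (h : ∀ z ∈ L, ζ * z ∈ L) (m : ℕ) {z : R} (hz : z ∈ L) : ζ ^ m * z ∈ L := by
  induction m with
  | zero => simpa using hz
  | succ m ih => simpa [pow_succ', mul_assoc] using h _ ih

theorem AddSubgroup.inv_mul_mem_of_pow_eq_one {R : Type*} [DivisionRing R] {L : AddSubgroup R}
    {ζ : R} {n : ℕ} (hn : n ≠ 0) (hζ : ζ ^ n = 1) (h : ∀ z ∈ L, ζ * z ∈ L) {z : R}
    (hz : z ∈ L) : ζ⁻¹ * z ∈ L := by
  rw [← eq_inv_of_mul_eq_one_left (by rw [pow_sub_one_mul hn, hζ])]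
  exact L.pow_mul_mem h _ hz

theorem AddSubgroup.two_mul_cos_mul_mem {L : AddSubgroup ℂ} {n : ℕ} (hn : n ≠ 0)
    (h : ∀ z ∈ L, Complex.exp (2 * π * Complex.I / n) * z ∈ L) {z : ℂ} (hz : z ∈ L) :
    ((2 * cos (2 * π / n) : ℝ) : ℂ) * z ∈ L := by
  have hcos : ((2 * cos (2 * π / n) : ℝ) : ℂ) =
      Complex.exp (2 * π * Complex.I / n) + (Complex.exp (2 * π * Complex.I / n))⁻¹ := by
    rw [← Complex.exp_neg]
    push_cast
    rw [Complex.two_cos]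
    ring_nf
  rw [hcos, add_mul]
  exact L.add_mem (h z hz) (L.inv_mul_mem_of_pow_eq_one hn
    (Complex.isPrimitiveRoot_exp n hn).pow_eq_one h hz)

theorem eq_two_or_three_or_four_or_six_of_cos_two_pi_div_eq_ratCast {n : ℕ} (hn : 2 ≤ n)
    (h : ∃ q : ℚ, cos (2 * π / n) = q) : n = 2 ∨ n = 3 ∨ n = 4 ∨ n = 6 := by
  have hn' : (2 : ℚ) ≤ n := by exact_mod_cast hn
  have hr : ((2 / n : ℚ) : ℝ) * π = 2 * π / n := by push_cast; ring
  have hniven := niven_angle_div_pi_eq (r := 2 / n) (by rwa [hr])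
    ⟨by positivity, (div_le_one (by positivity)).mpr (by linarith)⟩
  simp only [Set.mem_insert_iff, Set.mem_singleton_iff] at hniven
  rcases hniven with h | h | h | h | h <;> field_simp at h <;> norm_cast at h <;> omega

theorem stmt19 (k : ℕ) (hk : 3 ≤ k) (L : AddSubgroup ℂ) (hL : L ≠ ⊥)
    (hdisc : ∃ ε : ℝ, 0 < ε ∧ ∀ z ∈ L, z ≠ 0 → ε ≤ ‖z‖)
    (hrot : ∀ z ∈ L, Complex.exp (2 * π * Complex.I / ((k : ℂ) - 1)) * z ∈ L) :
    k = 3 ∨ k = 4 ∨ k = 5 ∨ k = 7 := by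
  have hcast : (k : ℂ) - 1 = ((k - 1 : ℕ) : ℂ) := by
    push_cast [Nat.cast_sub (by omega : 1 ≤ k)]; rfl
  rw [hcast] at hrot
  obtain ⟨N, hN⟩ := L.exists_intCast_eq_of_smul_mem hL hdisc fun z hz => by
    rw [Complex.real_smul]
    exact L.two_mul_cos_mul_mem (by omega) hrot hz
  have hn := eq_two_or_three_or_four_or_six_of_cos_two_pi_div_eq_ratCast (n := k - 1) (by omega)
    ⟨N / 2, by push_cast; linarith⟩
  omega
end
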